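/- For Ψ ∈ (0, π/2): (3/(16 sin Ψ)) ∫_{-Ψ}^{Ψ} ∫_{Ψ}^{π/2} (1 + sin β) sin((β - α)/2) dβ dα = (3/(16 sin Ψ)) [4 sin Ψ - (8√2/3) sin(Ψ/2) - (16/3) sin⁴(Ψ/2)]. -/

import Mathlib

open Real

/-!
The integrand splits by product-to-sum as
`sin ((β - α) / 2) + (cos ((β + α) / 2) - cos ((3β - α) / 2)) / 2`, so both integrations are done
with explicit primitives, and the boundary values reduce to the stated closed form by the addition
formulas at `π / 4` and `cos Ψ = 1 - 2 sin² (Ψ / 2)`.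
-/

noncomputable def zigzagInnerPrimitive (α β : ℝ) : ℝ :=
  -2 * cos ((β - α) / 2) + sin ((β + α) / 2) - 1 / 3 * sin ((3 * β - α) / 2)

noncomputable def zigzagOuterPrimitive (β α : ℝ) : ℝ :=
  4 * sin ((β - α) / 2) - 2 * cos ((β + α) / 2) - 2 / 3 * cos ((3 * β - α) / 2)

lemma one_add_sin_mul_sin_half (α β : ℝ) :
    (1 + sin β) * sin ((β - α) / 2)
      = sin ((β - α) / 2) + (cos ((β + α) / 2) - cos ((3 * β - α) / 2)) / 2 := by
  have h := two_mul_sin_mul_sin β ((β - α) / 2)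
  rw [show β - (β - α) / 2 = (β + α) / 2 by ring,
    show β + (β - α) / 2 = (3 * β - α) / 2 by ring] at h
  linear_combination h / 2

lemma hasDerivAt_zigzagInnerPrimitive (α β : ℝ) :
    HasDerivAt (zigzagInnerPrimitive α) ((1 + sin β) * sin ((β - α) / 2)) β := by
  have h₁ : HasDerivAt (fun β => (β - α) / 2) (1 / 2) β :=
    ((hasDerivAt_id β).sub_const α).div_const 2
  have h₂ : HasDerivAt (fun β => (β + α) / 2) (1 / 2) β :=
    ((hasDerivAt_id β).add_const α).div_const 2
  have h₃ : HasDerivAt (fun β => (3 * β - α) / 2) (3 / 2) β := by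
    simpa using (((hasDerivAt_id β).const_mul 3).sub_const α).div_const 2
  refine (((h₁.cos.const_mul (-2)).add h₂.sin).sub (h₃.sin.const_mul (1 / 3))).congr_deriv ?_
  rw [one_add_sin_mul_sin_half]
  ring

lemma hasDerivAt_zigzagOuterPrimitive (β α : ℝ) :
    HasDerivAt (zigzagOuterPrimitive β) (zigzagInnerPrimitive α β) α := by
  have h₁ : HasDerivAt (fun α => (β - α) / 2) (-1 / 2) α := by
    simpa using ((hasDerivAt_id α).const_sub β).div_const 2
  have h₂ : HasDerivAt (fun α => (β + α) / 2) (1 / 2) α :=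
    ((hasDerivAt_id α).const_add β).div_const 2
  have h₃ : HasDerivAt (fun α => (3 * β - α) / 2) (-1 / 2) α := by
    simpa using ((hasDerivAt_id α).const_sub (3 * β)).div_const 2
  refine (((h₁.sin.const_mul 4).sub (h₂.cos.const_mul 2)).sub
    (h₃.cos.const_mul (2 / 3))).congr_deriv ?_
  rw [zigzagInnerPrimitive]
  ring

lemma integral_one_add_sin_mul_sin_half (α a b : ℝ) :
    ∫ β in a..b, (1 + sin β) * sin ((β - α) / 2)
      = zigzagInnerPrimitive α b - zigzagInnerPrimitive α a :=
  intervalIntegral.integral_eq_sub_of_hasDerivAt (fun β _ => hasDerivAt_zigzagInnerPrimitive α β)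
    (by apply Continuous.intervalIntegrable; fun_prop)

lemma intervalIntegrable_zigzagInnerPrimitive (β a b : ℝ) :
    IntervalIntegrable (fun α => zigzagInnerPrimitive α β) MeasureTheory.volume a b := by
  apply Continuous.intervalIntegrable
  unfold zigzagInnerPrimitive
  fun_prop

lemma integral_zigzagInnerPrimitive (β a b : ℝ) :
    ∫ α in a..b, zigzagInnerPrimitive α β
      = zigzagOuterPrimitive β b - zigzagOuterPrimitive β a :=
  intervalIntegral.integral_eq_sub_of_hasDerivAt (fun α _ => hasDerivAt_zigzagOuterPrimitive β α)
    (intervalIntegrable_zigzagInnerPrimitive β a b)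

lemma zigzagOuterPrimitive_pi_div_two_sub (Ψ : ℝ) :
    zigzagOuterPrimitive (π / 2) Ψ - zigzagOuterPrimitive (π / 2) (-Ψ)
      = -(8 * √2 / 3) * sin (Ψ / 2) := by
  simp only [zigzagOuterPrimitive]
  rw [show (π / 2 - Ψ) / 2 = π / 4 - Ψ / 2 by ring, show (π / 2 + Ψ) / 2 = π / 4 + Ψ / 2 by ring,
    show (π / 2 - -Ψ) / 2 = π / 4 + Ψ / 2 by ring, show (π / 2 + -Ψ) / 2 = π / 4 - Ψ / 2 by ring,
    show (3 * (π / 2) - Ψ) / 2 = π / 2 + (π / 4 - Ψ / 2) by ring,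
    show (3 * (π / 2) - -Ψ) / 2 = π / 2 + (π / 4 + Ψ / 2) by ring]
  simp only [sin_add, cos_add, sin_sub, cos_sub, sin_pi_div_four, cos_pi_div_four,
    sin_pi_div_two, cos_pi_div_two]
  ring

lemma zigzagOuterPrimitive_self_sub_neg (Ψ : ℝ) :
    zigzagOuterPrimitive Ψ Ψ - zigzagOuterPrimitive Ψ (-Ψ)
      = -4 * sin Ψ + 16 / 3 * sin (Ψ / 2) ^ 4 := by
  simp only [zigzagOuterPrimitive]
  rw [show (Ψ - Ψ) / 2 = 0 by ring, show (Ψ + Ψ) / 2 = Ψ by ring, show (3 * Ψ - Ψ) / 2 = Ψ by ring,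
    show (Ψ - -Ψ) / 2 = Ψ by ring, show (Ψ + -Ψ) / 2 = 0 by ring,
    show (3 * Ψ - -Ψ) / 2 = 2 * Ψ by ring, cos_two_mul, sin_zero, cos_zero]
  have hcos : cos Ψ = 1 - 2 * sin (Ψ / 2) ^ 2 := by
    rw [← cos_two_mul_eq_one_sub, mul_div_cancel₀ Ψ two_ne_zero]
  rw [hcos]
  ring

theorem zigzag_term_I (Ψ : ℝ) :
    (3 / (16 * Real.sin Ψ)) * ∫ α in (-Ψ)..Ψ, ∫ β in Ψ..(π/2),
        (1 + Real.sin β) * Real.sin ((β - α)/2)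
      = (3 / (16 * Real.sin Ψ)) *
        (4 * Real.sin Ψ - (8 * Real.sqrt 2 / 3) * Real.sin (Ψ/2)
          - (16/3) * Real.sin (Ψ/2) ^ 4) := by
  simp_rw [integral_one_add_sin_mul_sin_half]
  rw [intervalIntegral.integral_sub (intervalIntegrable_zigzagInnerPrimitive _ _ _)
    (intervalIntegrable_zigzagInnerPrimitive _ _ _), integral_zigzagInnerPrimitive,
    integral_zigzagInnerPrimitive, zigzagOuterPrimitive_pi_div_two_sub,
    zigzagOuterPrimitive_self_sub_neg]
  ring
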